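/- Define x(ξ,η) = (η + ξ)/(η − ξ), y(ξ,η) = (η·ξ − 1)/(η − ξ), and μ(ξ,η) = log((η·ξ + 1)/(η − ξ)) on the domain {(ξ,η) ∈ ℝ² : η > ξ and η·ξ + 1 > 0}. Then x, y, μ satisfy the twistor compatibility system at every point of this domain, i.e. x_{ξη} = μ_ξ·x_η + μ_η·x_ξ and y_{ξη} = μ_ξ·y_η + μ_η·y_ξ. -/

import Mathlib

/-!
Both `x` and `y` have the form `f = (a (ηξ - 1) + b ξ + c η) / (η - ξ)`, with
`(a, b, c) = (0, 1, 1)` and `(1, 0, 0)`, and every such `f` solves the system. Writing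
`P u = a u² + (b + c) u - a`, one finds `f_ξ = P η / (η - ξ)²`, `f_η = -P ξ / (η - ξ)²`,
`μ_ξ = (η² + 1) / ((η - ξ)(ηξ + 1))` and `μ_η = -(ξ² + 1) / ((η - ξ)(ηξ + 1))`. After clearing
denominators, `f_ξη - μ_ξ f_η - μ_η f_ξ` becomes `(a - a) (η - ξ)²`: the leading coefficient of
`P` cancels against its constant term.
-/

open Real

def TwistorCompatibleAt (μ f : ℝ → ℝ → ℝ) (ξ η : ℝ) : Prop :=
  deriv (fun s => deriv (fun t => f t s) ξ) η
    = deriv (fun t => μ t η) ξ * deriv (fun s => f ξ s) η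
      + deriv (fun s => μ ξ s) η * deriv (fun t => f t η) ξ

lemma hasDerivAt_linear_div_linear (p q r s u : ℝ) (h : r * u + s ≠ 0) :
    HasDerivAt (fun u => (p * u + q) / (r * u + s)) ((p * s - q * r) / (r * u + s) ^ 2) u := by
  have hnum := ((hasDerivAt_id u).const_mul p).add_const q
  have hden := ((hasDerivAt_id u).const_mul r).add_const s
  refine (hnum.div hden h).congr_deriv ?_
  simp only [id]
  ring

lemma hasDerivAt_log_linear_div_linear (p q r s u : ℝ) (hnum : p * u + q ≠ 0)
    (hden : r * u + s ≠ 0) :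
    HasDerivAt (fun u => log ((p * u + q) / (r * u + s)))
      ((p * s - q * r) / ((p * u + q) * (r * u + s))) u := by
  refine ((hasDerivAt_linear_div_linear p q r s u hden).log (div_ne_zero hnum hden)).congr_deriv ?_
  field_simp

section

variable {a b c : ℝ} {f : ℝ → ℝ → ℝ} {ξ η : ℝ}

lemma hasDerivAt_fst_of_eq_div_sub
    (hf : ∀ ξ η, f ξ η = (a * (η * ξ - 1) + b * ξ + c * η) / (η - ξ)) (h : ξ ≠ η) :
    HasDerivAt (fun t => f t η) ((a * η ^ 2 + (b + c) * η - a) / (η - ξ) ^ 2) ξ := by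
  have hfun : (fun t => f t η) = fun t => ((a * η + b) * t + (c * η - a)) / (-1 * t + η) :=
    funext fun t => by rw [hf]; ring
  have hden : -1 * ξ + η ≠ 0 := fun h' => h (by linarith)
  rw [hfun]
  refine (hasDerivAt_linear_div_linear _ _ _ _ ξ hden).congr_deriv ?_
  ring

lemma hasDerivAt_snd_of_eq_div_sub
    (hf : ∀ ξ η, f ξ η = (a * (η * ξ - 1) + b * ξ + c * η) / (η - ξ)) (h : ξ ≠ η) :
    HasDerivAt (fun s => f ξ s) (-(a * ξ ^ 2 + (b + c) * ξ - a) / (η - ξ) ^ 2) η := by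
  have hfun : (fun s => f ξ s) = fun s => ((a * ξ + c) * s + (b * ξ - a)) / (1 * s + -ξ) :=
    funext fun s => by rw [hf]; ring
  have hden : 1 * η + -ξ ≠ 0 := fun h' => h (by linarith)
  rw [hfun]
  refine (hasDerivAt_linear_div_linear _ _ _ _ η hden).congr_deriv ?_
  ring

lemma hasDerivAt_deriv_fst_of_eq_div_sub
    (hf : ∀ ξ η, f ξ η = (a * (η * ξ - 1) + b * ξ + c * η) / (η - ξ)) (h : ξ ≠ η) :
    HasDerivAt (fun s => deriv (fun t => f t s) ξ)
      (((2 * a * η + (b + c)) * (η - ξ) - 2 * (a * η ^ 2 + (b + c) * η - a)) / (η - ξ) ^ 3) η := by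
  have hev : (fun s => deriv (fun t => f t s) ξ)
      =ᶠ[nhds η] fun s => (a * s ^ 2 + (b + c) * s - a) / (s - ξ) ^ 2 := by
    filter_upwards [eventually_ne_nhds h.symm] with s hs
    exact (hasDerivAt_fst_of_eq_div_sub hf hs.symm).deriv
  have hnum : HasDerivAt (fun s => a * s ^ 2 + (b + c) * s - a) (2 * a * η + (b + c)) η := by
    refine ((((hasDerivAt_pow 2 η).const_mul a).add
      ((hasDerivAt_id η).const_mul (b + c))).sub_const a).congr_deriv ?_
    ring
  have hden : HasDerivAt (fun s => (s - ξ) ^ 2) (2 * (η - ξ)) η := by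
    refine (((hasDerivAt_id η).sub_const ξ).pow 2).congr_deriv ?_
    simp only [id]
    ring
  have hden_ne : (η - ξ) ^ 2 ≠ 0 := pow_ne_zero 2 (sub_ne_zero.mpr h.symm)
  refine ((hnum.div hden hden_ne).congr_deriv ?_).congr_of_eventuallyEq hev
  field_simp

end

theorem twistorCompatibleAt_of_eq_div_sub {a b c : ℝ} {μ f : ℝ → ℝ → ℝ} {ξ η : ℝ}
    (hμ : ∀ ξ η, μ ξ η = log ((η * ξ + 1) / (η - ξ)))
    (hf : ∀ ξ η, f ξ η = (a * (η * ξ - 1) + b * ξ + c * η) / (η - ξ))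
    (h : ξ ≠ η) (hprod : η * ξ + 1 ≠ 0) :
    TwistorCompatibleAt μ f ξ η := by
  have hμ_fst : deriv (fun t => μ t η) ξ = (η ^ 2 + 1) / ((η - ξ) * (η * ξ + 1)) := by
    have hfun : (fun t => μ t η) = fun t => log ((η * t + 1) / (-1 * t + η)) :=
      funext fun t => by rw [hμ]; ring_nf
    rw [hfun, (hasDerivAt_log_linear_div_linear η 1 (-1) η ξ hprod
      fun h' => h (by linarith)).deriv]
    ring
  have hμ_snd : deriv (fun s => μ ξ s) η = -(ξ ^ 2 + 1) / ((η - ξ) * (η * ξ + 1)) := by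
    have hfun : (fun s => μ ξ s) = fun s => log ((ξ * s + 1) / (1 * s + -ξ)) :=
      funext fun s => by rw [hμ]; ring_nf
    rw [hfun, (hasDerivAt_log_linear_div_linear ξ 1 1 (-ξ) η
      (fun h' => hprod (by linarith)) fun h' => h (by linarith)).deriv]
    ring
  unfold TwistorCompatibleAt
  rw [hμ_fst, hμ_snd, (hasDerivAt_deriv_fst_of_eq_div_sub hf h).deriv,
    (hasDerivAt_fst_of_eq_div_sub hf h).deriv, (hasDerivAt_snd_of_eq_div_sub hf h).deriv]
  field_simp
  ring

/-- the elliptic data `x = (η + ξ)/(η − ξ)`, `y = (ηξ − 1)/(η − ξ)`,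
`μ = log ((ηξ + 1)/(η − ξ))` satisfies the twistor compatibility system on
`{η > ξ, ηξ + 1 > 0}`. -/
theorem stmt_5 (x y μ : ℝ → ℝ → ℝ)
    (hx : x = fun ξ η => (η + ξ) / (η - ξ))
    (hy : y = fun ξ η => (η * ξ - 1) / (η - ξ))
    (hμ : μ = fun ξ η => Real.log ((η * ξ + 1) / (η - ξ))) :
    ∀ ξ η : ℝ, ξ < η → 0 < η * ξ + 1 →
      (deriv (fun s => deriv (fun t => x t s) ξ) η
          = deriv (fun t => μ t η) ξ * deriv (fun s => x ξ s) η
            + deriv (fun s => μ ξ s) η * deriv (fun t => x t η) ξ) ∧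
      (deriv (fun s => deriv (fun t => y t s) ξ) η
          = deriv (fun t => μ t η) ξ * deriv (fun s => y ξ s) η
            + deriv (fun s => μ ξ s) η * deriv (fun t => y t η) ξ) := by
  subst hx hy hμ
  intro ξ η hlt hpos
  exact ⟨twistorCompatibleAt_of_eq_div_sub (a := 0) (b := 1) (c := 1) (fun _ _ => rfl)
      (fun _ _ => by ring) hlt.ne hpos.ne',
    twistorCompatibleAt_of_eq_div_sub (a := 1) (b := 0) (c := 0) (fun _ _ => rfl)
      (fun _ _ => by ring) hlt.ne hpos.ne'⟩
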